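/- arXiv:1303.5583 — 3 statements merged into one kernel-verified Lean document; each statement's English description precedes it below -/
import Mathlib

section
/- Let P be C³ on [0,∞) with P' > 0 and P'' > 0, and let f(v) := min_{u>0}(v²/u + P(u)) with minimizer u*(v) satisfying P'(u*)u*² = v². Then u* is differentiable in v, and f''(v) = 2P''(u*) / (P''(u*)u* + 2P'(u*)) > 0; in particular f is strictly convex on (0,∞). -/
/-!
Write `g u = P'(u) u²`, so that `u*` is determined by `g (u* v) = v²`. Since `g' > 0`, the function
`u*` is a strictly increasing bijection of `(0, ∞)`, hence continuous, and implicit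
differentiation gives `u*' = 2v / g'(u*)`. By the envelope theorem `f'(v) = ∂F/∂v = 2v / u*`,
because `∂F/∂u` vanishes at the minimizer; differentiating once more and eliminating `v²` with
`P'(u*) u*² = v²` yields `f'' = 2P''(u*) / (P''(u*) u* + 2P'(u*)) > 0`.
-/

open Set Filter Topology

theorem hasDerivAt_mul_sq {φ : ℝ → ℝ} {φ' x : ℝ} (h : HasDerivAt φ φ' x) :
    HasDerivAt (fun u => φ u * u ^ 2) (φ' * x ^ 2 + 2 * φ x * x) x := by
  refine (h.mul (hasDerivAt_pow 2 x)).congr_deriv ?_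
  norm_num
  ring

theorem continuousOn_Ioi_of_comp_eq_sq {g u : ℝ → ℝ} (hg : StrictMonoOn g (Ioi 0))
    (hg_pos : ∀ x ∈ Ioi 0, 0 < g x) (hu : MapsTo u (Ioi 0) (Ioi 0))
    (heq : ∀ v ∈ Ioi 0, g (u v) = v ^ 2) : ContinuousOn u (Ioi 0) := by
  have hmono : StrictMonoOn u (Ioi 0) := fun v hv w hw hvw => by
    rw [← hg.lt_iff_lt (hu hv) (hu hw), heq v hv, heq w hw]
    exact pow_lt_pow_left₀ hvw (le_of_lt hv) two_ne_zero
  have himage : u '' Ioi 0 = Ioi 0 := by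
    refine hu.image_subset.antisymm fun y hy => ?_
    have hv : 0 < √(g y) := Real.sqrt_pos.2 (hg_pos y hy)
    refine ⟨√(g y), hv, hg.injOn (hu hv) hy ?_⟩
    rw [heq _ hv, Real.sq_sqrt (hg_pos y hy).le]
  intro v hv
  refine (hmono.continuousAt_of_image_mem_nhds (Ioi_mem_nhds hv) ?_).continuousWithinAt
  rw [himage]
  exact Ioi_mem_nhds (hu hv)

theorem HasDerivAt.of_comp_eq_sq {g u : ℝ → ℝ} {g' v : ℝ} (hv : 0 < v) (hu : ContinuousAt u v)
    (hg : HasDerivAt g g' (u v)) (hg' : g' ≠ 0) (heq : ∀ᶠ w in 𝓝 v, g (u w) = w ^ 2) :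
    HasDerivAt u (2 * v / g') v := by
  have hguv : g (u v) = v ^ 2 := heq.self_of_nhds
  have hsqrt : HasDerivAt (fun x => √(g x)) (g' / (2 * v)) (u v) := by
    simpa only [hguv, Real.sqrt_sq hv.le] using hg.sqrt (by rw [hguv]; positivity)
  have hinv : ∀ᶠ w in 𝓝 v, √(g (u w)) = w := by
    filter_upwards [heq, Ioi_mem_nhds hv] with w hw hw0
    rw [hw, Real.sqrt_sq (le_of_lt hw0)]
  simpa only [inv_div] using hsqrt.of_local_left_inverse hu (by positivity) hinv

/-- Envelope theorem for `F(u, v) = v²/u + P(u)`: along a curve of critical points of `F(·, v)`,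
the derivative of `F(u(v), v)` is just `∂F/∂v`. -/
theorem hasDerivAt_sq_div_add_comp_of_critical {P u : ℝ → ℝ} {p u' v : ℝ}
    (hu : HasDerivAt u u' v) (hu0 : u v ≠ 0) (hP : HasDerivAt P p (u v))
    (hcrit : p * u v ^ 2 = v ^ 2) :
    HasDerivAt (fun w => w ^ 2 / u w + P (u w)) (2 * v / u v) v := by
  refine (((hasDerivAt_pow 2 v).div hu hu0).add (hP.comp v hu)).congr_deriv ?_
  rw [← hcrit]
  field_simp
  ring

theorem hasDerivAt_two_mul_div {u : ℝ → ℝ} {a b v : ℝ}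
    (hu : HasDerivAt u (2 * v / (b * u v ^ 2 + 2 * a * u v)) v) (hu0 : 0 < u v) (ha : 0 < a)
    (hb : 0 ≤ b) (hcrit : a * u v ^ 2 = v ^ 2) :
    HasDerivAt (fun w => 2 * w / u w) (2 * b / (b * u v + 2 * a)) v := by
  have hD : b * u v + 2 * a ≠ 0 := by positivity
  refine (((hasDerivAt_id v).const_mul 2).div hu hu0.ne').congr_deriv ?_
  have hu0' := hu0.ne'
  rw [id]
  field_simp
  linear_combination 2 * hcrit

theorem stmt4_general (P P' P'' : ℝ → ℝ)
    (hP' : ∀ u ∈ Ici (0:ℝ), HasDerivAt P (P' u) u)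
    (hP'' : ∀ u ∈ Ici (0:ℝ), HasDerivAt P' (P'' u) u)
    (hP'pos : ∀ u ∈ Ici (0:ℝ), 0 < P' u)
    (hP''pos : ∀ u ∈ Ici (0:ℝ), 0 < P'' u)
    (ustar : ℝ → ℝ)
    (hustar_pos : ∀ v ∈ Ioi (0:ℝ), 0 < ustar v)
    (hustar_eq : ∀ v ∈ Ioi (0:ℝ), P' (ustar v) * (ustar v)^2 = v^2) :
    (∀ v ∈ Ioi (0:ℝ), DifferentiableAt ℝ ustar v) ∧
    (∀ v ∈ Ioi (0:ℝ),
      deriv (deriv (fun v => v^2 / ustar v + P (ustar v))) v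
        = 2 * P'' (ustar v) / (P'' (ustar v) * ustar v + 2 * P' (ustar v)) ∧
      0 < 2 * P'' (ustar v) / (P'' (ustar v) * ustar v + 2 * P' (ustar v))) ∧
    StrictConvexOn ℝ (Ioi 0) (fun v => v^2 / ustar v + P (ustar v)) := by
  set f : ℝ → ℝ := fun v => v ^ 2 / ustar v + P (ustar v)
  have hg : ∀ u ∈ Ioi (0:ℝ), HasDerivAt (fun u => P' u * u ^ 2)
      (P'' u * u ^ 2 + 2 * P' u * u) u := fun u hu => hasDerivAt_mul_sq (hP'' u (Ioi_subset_Ici_self hu))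
  have hg'_pos : ∀ u ∈ Ioi (0:ℝ), 0 < P'' u * u ^ 2 + 2 * P' u * u := fun u hu => by
    have := hP'pos u (Ioi_subset_Ici_self hu); have := hP''pos u (Ioi_subset_Ici_self hu); have : 0 < u := hu
    positivity
  have hcont : ContinuousOn ustar (Ioi 0) := by
    refine continuousOn_Ioi_of_comp_eq_sq (g := fun u => P' u * u ^ 2) ?_ (fun u hu => ?_) hustar_pos hustar_eq
    · refine strictMonoOn_of_deriv_pos (convex_Ioi 0)
        (fun u hu => (hg u hu).continuousAt.continuousWithinAt) fun u hu => ?_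
      rw [interior_Ioi] at hu
      exact (hg u hu).deriv ▸ hg'_pos u hu
    · have := hP'pos u (Ioi_subset_Ici_self hu); have : 0 < u := hu
      positivity
  have hu' : ∀ v ∈ Ioi (0:ℝ), HasDerivAt ustar
      (2 * v / (P'' (ustar v) * ustar v ^ 2 + 2 * P' (ustar v) * ustar v)) v := fun v hv =>
    HasDerivAt.of_comp_eq_sq hv (hcont.continuousAt (Ioi_mem_nhds hv)) (hg _ (hustar_pos v hv))
      (hg'_pos _ (hustar_pos v hv)).ne' (eventually_of_mem (Ioi_mem_nhds hv) hustar_eq)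
  have hf' : ∀ v ∈ Ioi (0:ℝ), HasDerivAt f (2 * v / ustar v) v := fun v hv =>
    hasDerivAt_sq_div_add_comp_of_critical (hu' v hv) (hustar_pos v hv).ne'
      (hP' _ (le_of_lt (hustar_pos v hv))) (hustar_eq v hv)
  have hf'' : ∀ v ∈ Ioi (0:ℝ), deriv (deriv f) v
      = 2 * P'' (ustar v) / (P'' (ustar v) * ustar v + 2 * P' (ustar v)) := fun v hv => by
    have hu0 := hustar_pos v hv
    have hderiv : deriv f =ᶠ[𝓝 v] fun w => 2 * w / ustar w :=
      eventually_of_mem (Ioi_mem_nhds hv) fun w hw => (hf' w hw).deriv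
    rw [hderiv.deriv_eq]
    exact (hasDerivAt_two_mul_div (hu' v hv) hu0 (hP'pos _ (le_of_lt hu0))
      (hP''pos _ (le_of_lt hu0)).le (hustar_eq v hv)).deriv
  have hpos : ∀ v ∈ Ioi (0:ℝ),
      0 < 2 * P'' (ustar v) / (P'' (ustar v) * ustar v + 2 * P' (ustar v)) := fun v hv => by
    have hu0 := hustar_pos v hv
    have := hP'pos _ (le_of_lt hu0); have := hP''pos _ (le_of_lt hu0)
    positivity
  refine ⟨fun v hv => (hu' v hv).differentiableAt, fun v hv => ⟨hf'' v hv, hpos v hv⟩, ?_⟩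
  refine strictConvexOn_of_deriv2_pos (convex_Ioi 0)
    (fun v hv => (hf' v hv).continuousAt.continuousWithinAt) fun v hv => ?_
  rw [interior_Ioi] at hv
  simpa only [Function.iterate_succ, Function.iterate_zero, Function.comp_apply, Function.id_comp,
    hf'' v hv] using hpos v hv

/-- For `P` C³ on `[0,∞)` with `P' > 0`, `P'' > 0`, the minimizer `u*(v)` of
`F(·,v)` (determined by `P'(u*)u*² = v²`) is differentiable in `v`, and
`f''(v) = 2P''(u*)/(P''(u*)u* + 2P'(u*)) > 0`, where `f(v) = F(u*(v),v)`;
in particular `f` is strictly convex on `(0,∞)`. -/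
theorem stmt4 (P P' P'' P''' : ℝ → ℝ)
    (hP' : ∀ u ∈ Ici (0:ℝ), HasDerivAt P (P' u) u)
    (hP'' : ∀ u ∈ Ici (0:ℝ), HasDerivAt P' (P'' u) u)
    (hP''' : ∀ u ∈ Ici (0:ℝ), HasDerivAt P'' (P''' u) u)
    (hP'''cont : ContinuousOn P''' (Ici 0))
    (hP'pos : ∀ u ∈ Ici (0:ℝ), 0 < P' u)
    (hP''pos : ∀ u ∈ Ici (0:ℝ), 0 < P'' u)
    (ustar : ℝ → ℝ)
    (hustar_pos : ∀ v ∈ Ioi (0:ℝ), 0 < ustar v)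
    (hustar_eq : ∀ v ∈ Ioi (0:ℝ), P' (ustar v) * (ustar v)^2 = v^2) :
    (∀ v ∈ Ioi (0:ℝ), DifferentiableAt ℝ ustar v) ∧
    (∀ v ∈ Ioi (0:ℝ),
      deriv (deriv (fun v => v^2 / ustar v + P (ustar v))) v
        = 2 * P'' (ustar v) / (P'' (ustar v) * ustar v + 2 * P' (ustar v)) ∧
      0 < 2 * P'' (ustar v) / (P'' (ustar v) * ustar v + 2 * P' (ustar v))) ∧
    StrictConvexOn ℝ (Ioi 0) (fun v => v^2 / ustar v + P (ustar v)) :=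
  stmt4_general P P' P'' hP' hP'' hP'pos hP''pos ustar hustar_pos hustar_eq
end

section
/- Let P be C² on (0,∞) with P' > 0 and P'' > 0, let v* > 0, and let u₋, u₊ > 0 with F(u₋, v*) = F(u₊, v*) and u₋ ≠ u₊ (so u₋ < u*(v*) < u₊ or vice versa). Then the entropy condition Λ(u₊, v*) ≤ Λ(u₋, v*) holds if and only if u₊ ≥ u₋, where Λ(u,v) := v²/u² + 2Π'(u) and Π''(u) = P'(u)/u. -/
/-!
Write `F(u) = v²/u + P(u)` and `Λ(u) = v²/u² + 2Π'(u)`. Differentiating gives `Λ' = (2/u) F'`.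
Since `F(u₋) = F(u₊)`, Rolle gives a critical point `c` of `F` between `u₋` and `u₊`, and
`F' = P' - v²/u²` is strictly increasing, so `F'` has the sign of `u - c`. Hence
`(Λ - (2/c) F)' = 2 F' (1/u - 1/c)` is negative away from `c`, so `Λ - (2/c) F` is strictly
decreasing; evaluating at `u₋` and `u₊`, where the `F` terms agree, shows that `Λ` strictly
decreases across the jump exactly when `u₋ < u₊`.
-/

open Set

/-- The paper's `F`: the momentum flux of a stationary state. -/
noncomputable def momentumFlux (P : ℝ → ℝ) (u v : ℝ) : ℝ := v ^ 2 / u + P u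

/-- The paper's `Λ`: twice the Bernoulli function, `Π'` being the enthalpy. -/
noncomputable def bernoulliFn (Pi' : ℝ → ℝ) (u v : ℝ) : ℝ := v ^ 2 / u ^ 2 + 2 * Pi' u

theorem mul_neg_of_strictMonoOn_of_strictAntiOn {α : Type*} [LinearOrder α] {f g : α → ℝ}
    {s : Set α} {c x : α} (hf : StrictMonoOn f s) (hg : StrictAntiOn g s) (hc : c ∈ s)
    (hfc : f c = 0) (hgc : g c = 0) (hx : x ∈ s) (hxc : x ≠ c) : f x * g x < 0 := by
  rcases hxc.lt_or_gt with h | h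
  · exact mul_neg_of_neg_of_pos (hfc ▸ hf hx hc h) (hgc ▸ hg hx hc h)
  · exact mul_neg_of_pos_of_neg (hfc ▸ hf hc hx h) (hgc ▸ hg hc hx h)

theorem strictAntiOn_Ioi_of_hasDerivAt_neg_of_ne {f f' : ℝ → ℝ} {a c : ℝ} (hac : a < c)
    (hf : ∀ x ∈ Ioi a, HasDerivAt f (f' x) x) (hf' : ∀ x ∈ Ioi a, x ≠ c → f' x < 0) :
    StrictAntiOn f (Ioi a) := by
  have hcont : ContinuousOn f (Ioi a) := fun x hx => (hf x hx).continuousAt.continuousWithinAt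
  have hleft : StrictAntiOn f (Ioc a c) :=
    strictAntiOn_of_deriv_neg (convex_Ioc a c) (hcont.mono Ioc_subset_Ioi_self) fun x hx => by
      rw [interior_Ioc] at hx
      rw [(hf x hx.1).deriv]
      exact hf' x hx.1 hx.2.ne
  have hright : StrictAntiOn f (Ici c) :=
    strictAntiOn_of_deriv_neg (convex_Ici c) (hcont.mono (Ici_subset_Ioi.2 hac)) fun x hx => by
      rw [interior_Ici] at hx
      rw [(hf x (hac.trans hx)).deriv]
      exact hf' x (hac.trans hx) hx.ne'
  rw [← Ioc_union_Ici_eq_Ioi hac]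
  exact hleft.union hright (isGreatest_Ioc hac) isLeast_Ici

section StationaryJump

variable {P P' Pi' : ℝ → ℝ} {u v p : ℝ}

theorem hasDerivAt_momentumFlux (hP : HasDerivAt P p u) (hu : u ≠ 0) :
    HasDerivAt (momentumFlux P · v) (p - v ^ 2 / u ^ 2) u := by
  refine (((hasDerivAt_const u (v ^ 2)).div (hasDerivAt_id' u) hu).add hP).congr_deriv ?_
  field_simp
  ring

theorem hasDerivAt_bernoulliFn (hPi : HasDerivAt Pi' (p / u) u) (hu : u ≠ 0) :
    HasDerivAt (bernoulliFn Pi' · v) (2 / u * (p - v ^ 2 / u ^ 2)) u := by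
  refine (((hasDerivAt_const u (v ^ 2)).div (hasDerivAt_pow 2 u) (pow_ne_zero 2 hu)).add
    (hPi.const_mul 2)).congr_deriv ?_
  field_simp
  ring

theorem strictMonoOn_sub_div_sq (hP' : StrictMonoOn P' (Ioi 0)) :
    StrictMonoOn (fun u => P' u - v ^ 2 / u ^ 2) (Ioi 0) := by
  intro x hx y hy hxy
  have hx : (0 : ℝ) < x := hx
  have : v ^ 2 / y ^ 2 ≤ v ^ 2 / x ^ 2 := by gcongr
  linarith [hP' hx hy hxy]

theorem bernoulliFn_lt_of_momentumFlux_eq (hP : ∀ u ∈ Ioi (0 : ℝ), HasDerivAt P (P' u) u)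
    (hP' : StrictMonoOn P' (Ioi 0)) (hPi : ∀ u ∈ Ioi (0 : ℝ), HasDerivAt Pi' (P' u / u) u)
    {um up : ℝ} (hum : 0 < um) (hlt : um < up)
    (hF : momentumFlux P um v = momentumFlux P up v) :
    bernoulliFn Pi' up v < bernoulliFn Pi' um v := by
  have hF' : ∀ u ∈ Ioi (0 : ℝ),
      HasDerivAt (momentumFlux P · v) (P' u - v ^ 2 / u ^ 2) u := fun u hu =>
    hasDerivAt_momentumFlux (hP u hu) (ne_of_gt hu)
  have hIcc : Icc um up ⊆ Ioi 0 := fun x hx => hum.trans_le hx.1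
  obtain ⟨c, hc, hcrit⟩ := exists_hasDerivAt_eq_zero hlt
    (fun x hx => (hF' x (hIcc hx)).continuousAt.continuousWithinAt) hF
    (fun x hx => hF' x (hIcc (Ioo_subset_Icc_self hx)))
  have hc0 : 0 < c := hum.trans hc.1
  have hinv : StrictAntiOn (fun u : ℝ => 1 / u - 1 / c) (Ioi 0) := fun x hx y _ hxy => by
    simpa using one_div_lt_one_div_of_lt hx hxy
  have hK : ∀ u ∈ Ioi (0 : ℝ),
      HasDerivAt (fun u => bernoulliFn Pi' u v - 2 / c * momentumFlux P u v)
        (2 * ((P' u - v ^ 2 / u ^ 2) * (1 / u - 1 / c))) u := fun u hu => by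
    refine ((hasDerivAt_bernoulliFn (hPi u hu) (ne_of_gt hu)).sub
      ((hF' u hu).const_mul (2 / c))).congr_deriv ?_
    ring
  have hK' : ∀ u ∈ Ioi (0 : ℝ), u ≠ c →
      2 * ((P' u - v ^ 2 / u ^ 2) * (1 / u - 1 / c)) < 0 :=
    fun u hu huc => mul_neg_of_pos_of_neg two_pos <|
      mul_neg_of_strictMonoOn_of_strictAntiOn (strictMonoOn_sub_div_sq hP') hinv hc0 hcrit
        (sub_self _) hu huc
  have hanti := strictAntiOn_Ioi_of_hasDerivAt_neg_of_ne hc0 hK hK' hum (hum.trans hlt) hlt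
  simp only [hF] at hanti
  linarith

end StationaryJump

theorem stmt7_general (P P' P'' Pi' : ℝ → ℝ)
    (hP' : ∀ u ∈ Ioi (0:ℝ), HasDerivAt P (P' u) u)
    (hP'' : ∀ u ∈ Ioi (0:ℝ), HasDerivAt P' (P'' u) u)
    (hP''pos : ∀ u ∈ Ioi (0:ℝ), 0 < P'' u)
    (hPi' : ∀ u ∈ Ioi (0:ℝ), HasDerivAt Pi' (P' u / u) u)
    (vstar um up : ℝ) (hum : 0 < um) (hup : 0 < up)
    (hne : um ≠ up)
    (hRH : vstar^2 / um + P um = vstar^2 / up + P up) :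
    (vstar^2 / up^2 + 2 * Pi' up ≤ vstar^2 / um^2 + 2 * Pi' um) ↔ um ≤ up := by
  have hmono : StrictMonoOn P' (Ioi 0) :=
    strictMonoOn_of_hasDerivWithinAt_pos (convex_Ioi 0)
      (fun u hu => (hP'' u hu).continuousAt.continuousWithinAt)
      (fun u hu => by rw [interior_Ioi] at hu ⊢; exact (hP'' u hu).hasDerivWithinAt)
      (fun u hu => hP''pos u (interior_subset hu))
  constructor
  · intro h
    by_contra! hlt
    exact (bernoulliFn_lt_of_momentumFlux_eq hP' hmono hPi' hup hlt hRH.symm).not_ge h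
  · intro h
    exact (bernoulliFn_lt_of_momentumFlux_eq hP' hmono hPi' hum (h.lt_of_ne hne) hRH).le

/-- For a stationary jump of the isentropic Euler system: if `u₋ ≠ u₊` are positive
with `F(u₋,v*) = F(u₊,v*)` (where `F(u,v) = v²/u + P(u)`), then the entropy condition
`Λ(u₊,v*) ≤ Λ(u₋,v*)` holds if and only if `u₊ ≥ u₋`, where `Λ(u,v) = v²/u² + 2Π'(u)`
and `Π'` is an antiderivative of `u ↦ P'(u)/u`. -/
theorem stmt7 (P P' P'' Pi' : ℝ → ℝ)
    (hP' : ∀ u ∈ Ioi (0:ℝ), HasDerivAt P (P' u) u)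
    (hP'' : ∀ u ∈ Ioi (0:ℝ), HasDerivAt P' (P'' u) u)
    (hP''cont : ContinuousOn P'' (Ioi 0))
    (hP'pos : ∀ u ∈ Ioi (0:ℝ), 0 < P' u)
    (hP''pos : ∀ u ∈ Ioi (0:ℝ), 0 < P'' u)
    (hPi' : ∀ u ∈ Ioi (0:ℝ), HasDerivAt Pi' (P' u / u) u)
    (vstar um up : ℝ) (hv : 0 < vstar) (hum : 0 < um) (hup : 0 < up)
    (hne : um ≠ up)
    (hRH : vstar^2 / um + P um = vstar^2 / up + P up) :
    (vstar^2 / up^2 + 2 * Pi' up ≤ vstar^2 / um^2 + 2 * Pi' um) ↔ um ≤ up :=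
  stmt7_general P P' P'' Pi' hP' hP'' hP''pos hPi' vstar um up hum hup hne hRH
end

section
/- Let w̄ > 0, ε > 0, ℓ > 0, and ξ ∈ (-ℓ, ℓ). Then the equation √(2κ) · tanh((ℓ+ξ)/(ε) · √(κ/2)) = w̄ has a unique solution κ₋ = κ₋(ξ) in (w̄²/2, ∞). -/
/-!
Writing `c = (ℓ + ξ)/ε > 0`, the map `κ ↦ √(2κ) tanh(c √(κ/2))` is continuous and strictly
increasing on `[0, ∞)`, since both factors are nonnegative and increasing. It tends to `∞`,
and at `κ = w̄²/2` it equals `w̄ tanh(⋯) < w̄`; the intermediate value theorem on `(w̄²/2, ∞)`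
gives a solution and strict monotonicity makes it unique.
-/

open Real Set Filter

namespace Real

theorem tanh_strictMono : StrictMono tanh := fun a b hab => by
  have mem (x : ℝ) : tanh x ∈ Ioo (-1) 1 := ⟨neg_one_lt_tanh x, tanh_lt_one x⟩
  rwa [← strictMonoOn_artanh.lt_iff_lt (mem a) (mem b), artanh_tanh, artanh_tanh]

theorem tanh_pos {x : ℝ} (hx : 0 < x) : 0 < tanh x := by
  simpa using tanh_strictMono hx

theorem tanh_nonneg {x : ℝ} (hx : 0 ≤ x) : 0 ≤ tanh x := by
  simpa using tanh_strictMono.monotone hx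

@[fun_prop]
theorem continuous_tanh : Continuous tanh := by
  simp_rw +singlePass [funext tanh_eq_sinh_div_cosh]
  exact continuous_sinh.div continuous_cosh fun x => (cosh_pos x).ne'

end Real

noncomputable def sqrtMulTanh (c κ : ℝ) : ℝ := √(2 * κ) * tanh (c * √(κ / 2))

theorem continuous_sqrtMulTanh (c : ℝ) : Continuous (sqrtMulTanh c) := by
  unfold sqrtMulTanh
  fun_prop

theorem sqrtMulTanh_strictMonoOn {c : ℝ} (hc : 0 < c) :
    StrictMonoOn (sqrtMulTanh c) (Ici 0) := by
  intro a (ha : 0 ≤ a) b _ hab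
  exact mul_lt_mul'' (sqrt_lt_sqrt (by linarith) (by linarith))
    (tanh_strictMono (mul_lt_mul_of_pos_left (sqrt_lt_sqrt (by linarith) (by linarith)) hc))
    (sqrt_nonneg _) (tanh_nonneg (by positivity))

theorem sqrtMulTanh_lt_sqrt (c : ℝ) {κ : ℝ} (hκ : 0 < κ) : sqrtMulTanh c κ < √(2 * κ) :=
  mul_lt_of_lt_one_right (sqrt_pos.2 (by linarith)) (tanh_lt_one _)

theorem tendsto_sqrtMulTanh_atTop {c : ℝ} (hc : 0 < c) :
    Tendsto (sqrtMulTanh c) atTop atTop := by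
  have hlower : ∀ᶠ κ in atTop, √(2 * κ) * tanh (c * √(1 / 2)) ≤ sqrtMulTanh c κ := by
    filter_upwards [eventually_ge_atTop 1] with κ hκ
    exact mul_le_mul_of_nonneg_left
      (tanh_strictMono.monotone (by gcongr)) (sqrt_nonneg _)
  refine tendsto_atTop_mono' _ hlower (Tendsto.atTop_mul_const (tanh_pos (by positivity)) ?_)
  exact tendsto_sqrt_atTop.comp (tendsto_id.const_mul_atTop two_pos)

theorem existsUnique_sqrtMulTanh_eq {c w : ℝ} (hc : 0 < c) (hw : 0 < w) :
    ∃! κ, κ ∈ Ioi (w ^ 2 / 2) ∧ sqrtMulTanh c κ = w := by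
  have hstart : sqrtMulTanh c (w ^ 2 / 2) < w := by
    simpa [mul_div_cancel₀, sqrt_sq hw.le] using
      sqrtMulTanh_lt_sqrt c (by positivity : 0 < w ^ 2 / 2)
  obtain ⟨κ, hκ, hκw⟩ := intermediate_value_Ioi (continuous_sqrtMulTanh c).continuousOn
    (tendsto_sqrtMulTanh_atTop hc) hstart
  have hpos : Ioi (w ^ 2 / 2) ⊆ Ici 0 := Ioi_subset_Ici (by positivity)
  exact ⟨κ, ⟨hκ, hκw⟩, fun y ⟨hy, hyw⟩ =>
    (sqrtMulTanh_strictMonoOn hc).injOn (hpos hy) (hpos hκ) (hyw.trans hκw.symm)⟩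

theorem stmt9_general (wbar ε ℓ ξ : ℝ) (hwbar : 0 < wbar) (hε : 0 < ε)
    (hξ : ξ ∈ Ioo (-ℓ) ℓ) :
    ∃! κ : ℝ, κ ∈ Ioi (wbar^2 / 2) ∧
      Real.sqrt (2 * κ) * Real.tanh ((ℓ + ξ) / ε * Real.sqrt (κ / 2)) = wbar :=
  existsUnique_sqrtMulTanh_eq (div_pos (neg_lt_iff_pos_add'.1 hξ.1) hε) hwbar

/-- For `w̄, ε, ℓ > 0` and `ξ ∈ (-ℓ,ℓ)`, the equation
`√(2κ)·tanh((ℓ+ξ)/ε·√(κ/2)) = w̄` has a unique solution `κ₋` in `(w̄²/2, ∞)`. -/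
theorem stmt9 (wbar ε ℓ ξ : ℝ) (hwbar : 0 < wbar) (hε : 0 < ε) (hℓ : 0 < ℓ)
    (hξ : ξ ∈ Ioo (-ℓ) ℓ) :
    ∃! κ : ℝ, κ ∈ Ioi (wbar^2 / 2) ∧
      Real.sqrt (2 * κ) * Real.tanh ((ℓ + ξ) / ε * Real.sqrt (κ / 2)) = wbar :=
  stmt9_general wbar ε ℓ ξ hwbar hε hξ
end
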